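/- Let H and G be real Hilbert spaces, let β > 0, let h : H → ℝ be convex and differentiable with β^{-1}-Lipschitz continuous gradient, let g ∈ Γ_0(G), let L : H → G be bounded linear, let V be a closed vector subspace of H with orthogonal projection P_V, and define K(x,v) = h(x) + ι_V(x) + ⟨Lx,v⟩ − g*(v). Let γ ∈ ]0, β], let x_n ∈ V, let v₊ ∈ dom g*, and set x₊ = P_V(x_n − γ(L* v₊ + ∇h(x_n))). Then for every x ∈ V, γ (K(x₊, v₊) − K(x, v₊)) ≤ (1/2)(‖x_n − x‖² − ‖x₊ − x‖²) − (γ/2)(1/γ − 1/β)‖x₊ − x_n‖². -/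

import Mathlib

/-! On `V` the two values of `K` differ by `h(x₊) − h(x) + ⟪L* v₊, x₊ − x⟫`, the `g*` terms
cancelling. The descent lemma at `xₙ` together with the gradient inequality of convexity at `xₙ`
bounds `h(x₊) − h(x)` by `⟪∇h(xₙ), x₊ − x⟫ + ‖x₊ − xₙ‖² / (2β)`. Orthogonality of the projection
residual to `V` turns `γ ⟪L* v₊ + ∇h(xₙ), x₊ − x⟫` into `⟪xₙ − x₊, x₊ − x⟫`, and expanding
`‖xₙ − x‖² = ‖(xₙ − x₊) + (x₊ − x)‖²` gives the right-hand side. -/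

open scoped RealInnerProductSpace

/-- The orthogonal projection of `H` onto the closed subspace `V`, as a map `H →L[ℝ] H`. -/
noncomputable def projV {H : Type*} [NormedAddCommGroup H] [InnerProductSpace ℝ H]
    (V : Submodule ℝ H) [V.HasOrthogonalProjection] : H →L[ℝ] H :=
  V.subtypeL.comp V.orthogonalProjectionOnto

/-- Fenchel conjugate of an `EReal`-valued function on a real inner product space. -/
noncomputable def fconj {G : Type*} [NormedAddCommGroup G] [InnerProductSpace ℝ G]
    (g : G → EReal) (v : G) : EReal :=
  ⨆ y : G, ((⟪v, y⟫ : ℝ) : EReal) - g y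

open Classical in
/-- The saddle function `K(x,v) = h(x) + ι_V(x) + ⟨Lx, v⟩ − g*(v)` (with values in `EReal`). -/
noncomputable def saddleK {H G : Type*} [NormedAddCommGroup H] [InnerProductSpace ℝ H]
    [NormedAddCommGroup G] [InnerProductSpace ℝ G]
    (h : H → ℝ) (g : G → EReal) (L : H →L[ℝ] G) (V : Submodule ℝ H)
    (x : H) (v : G) : EReal :=
  ((h x : ℝ) : EReal) + (if x ∈ V then (0 : EReal) else ⊤)
    + ((⟪L x, v⟫ : ℝ) : EReal) - fconj g v

section Gradient

open AffineMap

variable {H : Type*} [NormedAddCommGroup H] [InnerProductSpace ℝ H] [CompleteSpace H]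
  {f : H → ℝ} {f' : H → H}

theorem HasGradientAt.hasDerivAt_comp_lineMap {g x y : H} {t : ℝ}
    (hf : HasGradientAt f g (lineMap x y t)) :
    HasDerivAt (fun s : ℝ => f (lineMap x y s)) ⟪g, y - x⟫ t := by
  simpa [InnerProductSpace.toDual_apply_apply, Function.comp_def] using
    hf.hasFDerivAt.comp_hasDerivAt t hasDerivAt_lineMap

theorem ConvexOn.add_inner_le_of_hasGradientAt (hf : ConvexOn ℝ Set.univ f) {g x : H}
    (hg : HasGradientAt f g x) (y : H) : f x + ⟪g, y - x⟫ ≤ f y := by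
  have hline : ConvexOn ℝ Set.univ (fun s : ℝ => f (lineMap x y s)) :=
    hf.comp_affineMap (lineMap x y)
  have hderiv : HasDerivAt (fun s : ℝ => f (lineMap x y s)) ⟪g, y - x⟫ 0 :=
    HasGradientAt.hasDerivAt_comp_lineMap (by rwa [lineMap_apply_zero])
  have := hline.le_slope_of_hasDerivAt trivial trivial zero_lt_one hderiv
  simp only [slope_def_field, lineMap_apply_zero, lineMap_apply_one, sub_zero, div_one] at this
  linarith

/-- The descent lemma: `ψ` is antitone on `[0, 1]` because at `lineMap x y t` the gradient is
within `K t ‖y - x‖` of `f' x`. -/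
theorem apply_le_add_inner_add_of_lipschitz_gradient {K : ℝ}
    (hgrad : ∀ z, HasGradientAt f (f' z) z) (hlip : ∀ z w, ‖f' z - f' w‖ ≤ K * ‖z - w‖)
    (x y : H) : f y ≤ f x + ⟪f' x, y - x⟫ + K / 2 * ‖y - x‖ ^ 2 := by
  set d := y - x
  set ψ : ℝ → ℝ := fun t => f (lineMap x y t) - t * ⟪f' x, d⟫ - K / 2 * ‖d‖ ^ 2 * t ^ 2
  have hψ : ∀ t, HasDerivAt ψ (⟪f' (lineMap x y t) - f' x, d⟫ - K * ‖d‖ ^ 2 * t) t := fun t =>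
    (((hgrad _).hasDerivAt_comp_lineMap.sub (hasDerivAt_mul_const _)).sub
      ((hasDerivAt_pow 2 t).const_mul _)).congr_deriv (by
        simp only [Nat.cast_ofNat, Nat.add_one_sub_one, pow_one, inner_sub_left]; ring)
  have hψ_nonpos : ∀ t ∈ interior (Set.Icc (0 : ℝ) 1),
      ⟪f' (lineMap x y t) - f' x, d⟫ - K * ‖d‖ ^ 2 * t ≤ 0 := by
    intro t ht
    rw [interior_Icc] at ht
    have hdist : ‖lineMap x y t - x‖ = t * ‖d‖ := by
      rw [← vsub_eq_sub, lineMap_vsub_left, norm_smul, Real.norm_of_nonneg ht.1.le, vsub_eq_sub]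
    have := calc ⟪f' (lineMap x y t) - f' x, d⟫ ≤ ‖f' (lineMap x y t) - f' x‖ * ‖d‖ :=
          real_inner_le_norm _ _
      _ ≤ K * ‖lineMap x y t - x‖ * ‖d‖ := by gcongr; exact hlip _ _
      _ = K * ‖d‖ ^ 2 * t := by rw [hdist]; ring
    linarith
  have hanti : AntitoneOn ψ (Set.Icc 0 1) :=
    antitoneOn_of_hasDerivWithinAt_nonpos (convex_Icc 0 1)
      (HasDerivAt.continuousOn fun t _ => hψ t) (fun t _ => (hψ t).hasDerivWithinAt) hψ_nonpos
  have := hanti (by simp) (by simp) zero_le_one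
  simp only [ψ, lineMap_apply_zero, lineMap_apply_one] at this
  linarith

end Gradient

/-- For `c = ⊥` or `c = ⊤` the left-hand side is `⊤ - ⊤ = ⊥` or `⊥ - ⊥ = ⊥`. -/
theorem EReal.coe_sub_sub_coe_sub_le (a b : ℝ) (c : EReal) :
    (a : EReal) - c - ((b : EReal) - c) ≤ ((a - b : ℝ) : EReal) := by
  induction c using EReal.rec with
  | bot => simp
  | coe c => exact_mod_cast (show a - c - (b - c) ≤ a - b by linarith)
  | top => simp

section ProjectedGradient

variable {H : Type*} [NormedAddCommGroup H] [InnerProductSpace ℝ H]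

theorem Submodule.smul_inner_eq_inner_of_eq_starProjection (V : Submodule ℝ H)
    [V.HasOrthogonalProjection] {xn u xp x : H} {γ : ℝ}
    (hxp : xp = V.starProjection (xn - γ • u)) (hx : x ∈ V) :
    γ * ⟪u, xp - x⟫ = ⟪xn - xp, xp - x⟫ := by
  have hxpV : xp ∈ V := hxp ▸ V.starProjection_apply_mem _
  have := V.starProjection_inner_eq_zero (xn - γ • u) (xp - x) (V.sub_mem hxpV hx)
  rw [← hxp, sub_right_comm, inner_sub_left, real_inner_smul_left] at this
  linarith

variable [CompleteSpace H] {f : H → ℝ} {f' : H → H} {K : ℝ}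

theorem ConvexOn.projected_gradient_step_le (hf : ConvexOn ℝ Set.univ f)
    (hgrad : ∀ z, HasGradientAt f (f' z) z) (hlip : ∀ z w, ‖f' z - f' w‖ ≤ K * ‖z - w‖)
    (V : Submodule ℝ H) [V.HasOrthogonalProjection] (a : H) {γ : ℝ} (hγ : 0 < γ)
    {xn xp x : H} (hxp : xp = V.starProjection (xn - γ • (a + f' xn))) (hx : x ∈ V) :
    γ * (f xp + ⟪a, xp⟫ - (f x + ⟪a, x⟫))
      ≤ 1 / 2 * (‖xn - x‖ ^ 2 - ‖xp - x‖ ^ 2) - γ / 2 * (1 / γ - K) * ‖xp - xn‖ ^ 2 := by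
  have hdescent := apply_le_add_inner_add_of_lipschitz_gradient hgrad hlip xn xp
  have hconvex := hf.add_inner_le_of_hasGradientAt (hgrad xn) x
  have hf_sub : f xp - f x ≤ ⟪f' xn, xp - x⟫ + K / 2 * ‖xp - xn‖ ^ 2 := by
    have : ⟪f' xn, xp - x⟫ = ⟪f' xn, xp - xn⟫ - ⟪f' xn, x - xn⟫ := by
      rw [← inner_sub_right, sub_sub_sub_cancel_right]
    linarith
  have hstep := V.smul_inner_eq_inner_of_eq_starProjection hxp hx
  have hnorm : ‖xn - x‖ ^ 2 = ‖xn - xp‖ ^ 2 + 2 * ⟪xn - xp, xp - x⟫ + ‖xp - x‖ ^ 2 := by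
    rw [← norm_add_sq_real, sub_add_sub_cancel]
  calc γ * (f xp + ⟪a, xp⟫ - (f x + ⟪a, x⟫)) = γ * (f xp - f x + ⟪a, xp - x⟫) := by
        rw [inner_sub_right]; ring
    _ ≤ γ * (⟪f' xn, xp - x⟫ + K / 2 * ‖xp - xn‖ ^ 2 + ⟪a, xp - x⟫) := by gcongr
    _ = γ * ⟪a + f' xn, xp - x⟫ + γ * K / 2 * ‖xp - xn‖ ^ 2 := by rw [inner_add_left]; ring
    _ = 1 / 2 * (‖xn - x‖ ^ 2 - ‖xp - x‖ ^ 2) - γ / 2 * (1 / γ - K) * ‖xp - xn‖ ^ 2 := by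
        rw [hstep, norm_sub_rev xp xn]
        field_simp
        linear_combination -hnorm

end ProjectedGradient

theorem saddleK_of_mem {H G : Type*} [NormedAddCommGroup H] [InnerProductSpace ℝ H]
    [CompleteSpace H] [NormedAddCommGroup G] [InnerProductSpace ℝ G] [CompleteSpace G]
    (h : H → ℝ) (g : G → EReal) (L : H →L[ℝ] G) {V : Submodule ℝ H} {z : H} (hz : z ∈ V)
    (v : G) : saddleK h g L V z v = ((h z + ⟪L.adjoint v, z⟫ : ℝ) : EReal) - fconj g v := by
  simp [saddleK, hz, ContinuousLinearMap.adjoint_inner_left, real_inner_comm (L z)]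

theorem saddle_primal_descent_general
    {H G : Type*} [NormedAddCommGroup H] [InnerProductSpace ℝ H] [CompleteSpace H]
    [NormedAddCommGroup G] [InnerProductSpace ℝ G] [CompleteSpace G]
    (β : ℝ)
    (h : H → ℝ) (hconv : ConvexOn ℝ Set.univ h)
    (h' : H → H) (hgrad : ∀ z : H, HasGradientAt h (h' z) z)
    (hlip : ∀ z w : H, ‖h' z - h' w‖ ≤ β⁻¹ * ‖z - w‖)
    (g : G → EReal)
    (L : H →L[ℝ] G) (V : Submodule ℝ H) [V.HasOrthogonalProjection]
    (γ : ℝ) (hγ0 : 0 < γ)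
    (xn : H)
    (vplus : G)
    (xplus : H) (hxplus : xplus = projV V (xn - γ • (L.adjoint vplus + h' xn))) :
    ∀ x : H, x ∈ V →
      ((γ : ℝ) : EReal) * (saddleK h g L V xplus vplus - saddleK h g L V x vplus)
        ≤ ((1 / 2 * (‖xn - x‖ ^ 2 - ‖xplus - x‖ ^ 2)
            - γ / 2 * (1 / γ - 1 / β) * ‖xplus - xn‖ ^ 2 : ℝ) : EReal) := by
  intro x hx
  have hxplusV : xplus ∈ V := hxplus ▸ V.starProjection_apply_mem _
  have hreal := hconv.projected_gradient_step_le hgrad hlip V (L.adjoint vplus) hγ0 hxplus hx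
  rw [saddleK_of_mem h g L hxplusV, saddleK_of_mem h g L hx]
  calc _ ≤ (γ : EReal) * ((h xplus + ⟪L.adjoint vplus, xplus⟫
          - (h x + ⟪L.adjoint vplus, x⟫) : ℝ) : EReal) :=
        mul_le_mul_of_nonneg_left (EReal.coe_sub_sub_coe_sub_le _ _ _) (EReal.coe_nonneg.2 hγ0.le)
    _ ≤ _ := by
        rw [← EReal.coe_mul, EReal.coe_le_coe_iff, one_div β]
        exact hreal

/-- Primal descent inequality for the saddle function: for `γ ∈ ]0,β]`,
`xₙ ∈ V`, `v₊ ∈ dom g*` and `x₊ = P_V(xₙ − γ(L* v₊ + ∇h(xₙ)))`, every `x ∈ V` satisfies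
`γ(K(x₊,v₊) − K(x,v₊)) ≤ ½(‖xₙ−x‖² − ‖x₊−x‖²) − (γ/2)(1/γ − 1/β)‖x₊−xₙ‖²`. -/
theorem saddle_primal_descent
    {H G : Type*} [NormedAddCommGroup H] [InnerProductSpace ℝ H] [CompleteSpace H]
    [NormedAddCommGroup G] [InnerProductSpace ℝ G] [CompleteSpace G]
    (β : ℝ) (hβ : 0 < β)
    (h : H → ℝ) (hconv : ConvexOn ℝ Set.univ h)
    (h' : H → H) (hgrad : ∀ z : H, HasGradientAt h (h' z) z)
    (hlip : ∀ z w : H, ‖h' z - h' w‖ ≤ β⁻¹ * ‖z - w‖)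
    (g : G → EReal)
    (hg_ne_bot : ∀ y : G, g y ≠ ⊥) (hg_proper : ∃ y : G, g y ≠ ⊤)
    (hg_convex : ∀ y z : G, ∀ a b : ℝ, 0 ≤ a → 0 ≤ b → a + b = 1 →
      g (a • y + b • z) ≤ (a : EReal) * g y + (b : EReal) * g z)
    (hg_lsc : LowerSemicontinuous g)
    (L : H →L[ℝ] G) (V : Submodule ℝ H) [V.HasOrthogonalProjection]
    (γ : ℝ) (hγ0 : 0 < γ) (hγβ : γ ≤ β)
    (xn : H) (hxn : xn ∈ V)
    (vplus : G) (hvplus : fconj g vplus ≠ ⊤)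
    (xplus : H) (hxplus : xplus = projV V (xn - γ • (L.adjoint vplus + h' xn))) :
    ∀ x : H, x ∈ V →
      ((γ : ℝ) : EReal) * (saddleK h g L V xplus vplus - saddleK h g L V x vplus)
        ≤ ((1 / 2 * (‖xn - x‖ ^ 2 - ‖xplus - x‖ ^ 2)
            - γ / 2 * (1 / γ - 1 / β) * ‖xplus - xn‖ ^ 2 : ℝ) : EReal) :=
  saddle_primal_descent_general β h hconv h' hgrad hlip g L V γ hγ0 xn vplus xplus hxplus
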